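/- Let g be a weak cohyperation of an initial function f, let ξ and α be ordinals, and let η* < ξ be the least ordinal such that g η* α = min_{η<ξ} g η α (the least index below ξ minimizing g η α). Then: (1) g η α > g η* α whenever η < η*; and (2) g η α = g η* α whenever η* < η < ξ. -/

import Mathlib

open Ordinal

/-- An ordinal function is *initial* if it maps every initial segment onto an initial segment. -/
def Initial (g : Ordinal → Ordinal) : Prop :=
  ∀ β : Ordinal, ∃ γ : Ordinal, g '' {α | α < β} = {α | α < γ}

universe u v

/-- Normal ordinal function (the older Mathlib's `Ordinal.IsNormal`, restated). -/
def Ordinal.IsNormal (f : Ordinal.{u} → Ordinal.{v}) : Prop :=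
  StrictMono f ∧ ∀ o, Order.IsSuccLimit o → ∀ a, f o ≤ a ↔ ∀ b < o, f b ≤ a

/-- A *weak hyperation* of a normal function `f`. -/
def WeakHyperation (f : Ordinal → Ordinal) (g : Ordinal → Ordinal → Ordinal) : Prop :=
  (∀ ξ : Ordinal, Ordinal.IsNormal (g ξ)) ∧ g 0 = id ∧ g 1 = f ∧
    ∀ ξ ζ : Ordinal, g (ξ + ζ) = g ξ ∘ g ζ

/-- `F` is *the hyperation* of `f`: the pointwise minimal weak hyperation. -/
def IsHyperation (f : Ordinal → Ordinal) (F : Ordinal → Ordinal → Ordinal) : Prop :=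
  WeakHyperation f F ∧
    ∀ h : Ordinal → Ordinal → Ordinal, WeakHyperation f h → ∀ ξ ζ : Ordinal, F ξ ζ ≤ h ξ ζ

/-- A *weak cohyperation* of an initial function `f`. -/
def WeakCohyperation (f : Ordinal → Ordinal) (g : Ordinal → Ordinal → Ordinal) : Prop :=
  (∀ ξ : Ordinal, Initial (g ξ)) ∧ g 0 = id ∧ g 1 = f ∧
    ∀ ξ ζ : Ordinal, g (ξ + ζ) = g ζ ∘ g ξ

/-- `G` is *the cohyperation* of `f`: the pointwise maximal weak cohyperation. -/
def IsCohyperation (f : Ordinal → Ordinal) (G : Ordinal → Ordinal → Ordinal) : Prop :=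
  WeakCohyperation f G ∧
    ∀ h : Ordinal → Ordinal → Ordinal, WeakCohyperation f h → ∀ ξ α : Ordinal, h ξ α ≤ G ξ α

/-- `g` is a *left adjoint* of `f`. -/
def LeftAdjoint (f g : Ordinal → Ordinal) : Prop :=
  ∀ α β : Ordinal, (α = f β → g α = β) ∧ (α < f β → g α < β)

/-! An initial function is deflationary, so `g (η + ζ) α = g ζ (g η α) ≤ g η α` makes
`η ↦ g η α` antitone: past its least minimizer it cannot drop below the minimum, and before it
it cannot attain the minimum. -/

theorem Initial.apply_le {g : Ordinal → Ordinal} (hg : Initial g) (α : Ordinal) : g α ≤ α := by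
  induction α using WellFoundedLT.induction with
  | _ α ih =>
    by_contra! hlt
    obtain ⟨γ, hγ⟩ := hg (Order.succ α)
    have hgα : g α ∈ {x | x < γ} := hγ ▸ Set.mem_image_of_mem g (Order.lt_succ α)
    -- `α` lies below `g α`, hence in the initial segment `g '' [0, α]`.
    obtain ⟨β, hβ : β < Order.succ α, hgβ⟩ : α ∈ g '' {x | x < Order.succ α} := hγ ▸ hlt.trans hgα
    rcases (Order.lt_succ_iff.mp hβ).lt_or_eq with hβα | rfl
    · exact ((ih β hβα).trans_lt hβα).ne hgβ
    · exact hlt.ne hgβ.symm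

theorem WeakCohyperation.antitone_apply {f : Ordinal → Ordinal} {g : Ordinal → Ordinal → Ordinal}
    (hg : WeakCohyperation f g) (α : Ordinal) : Antitone (g · α) := by
  intro η ζ hηζ
  obtain ⟨hinit, -, -, hadd⟩ := hg
  calc g ζ α = g (ζ - η) (g η α) := by
        rw [← Function.comp_apply (f := g (ζ - η)), ← hadd, Ordinal.add_sub_cancel_of_le hηζ]
    _ ≤ g η α := (hinit _).apply_le _

theorem weakCohyperation_min_stable_general (f : Ordinal → Ordinal)
    (g : Ordinal → Ordinal → Ordinal) (hg : WeakCohyperation f g)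
    (ξ α ηstar : Ordinal) (hlt : ηstar < ξ)
    (hmin : ∀ η : Ordinal, η < ξ → g ηstar α ≤ g η α)
    (hleast : ∀ η : Ordinal, η < ξ → g η α ≤ g ηstar α → ηstar ≤ η) :
    (∀ η : Ordinal, η < ηstar → g ηstar α < g η α) ∧
    (∀ η : Ordinal, ηstar < η → η < ξ → g η α = g ηstar α) := by
  refine ⟨fun η hη => ?_, fun η hη hηξ => ?_⟩
  · by_contra! hle
    exact (hleast η (hη.trans hlt) hle).not_gt hη
  · exact le_antisymm (hg.antitone_apply α hη.le) (hmin η hηξ)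

theorem weakCohyperation_min_stable (f : Ordinal → Ordinal) (hf : Initial f)
    (g : Ordinal → Ordinal → Ordinal) (hg : WeakCohyperation f g)
    (ξ α ηstar : Ordinal) (hlt : ηstar < ξ)
    (hmin : ∀ η : Ordinal, η < ξ → g ηstar α ≤ g η α)
    (hleast : ∀ η : Ordinal, η < ξ → g η α ≤ g ηstar α → ηstar ≤ η) :
    (∀ η : Ordinal, η < ηstar → g ηstar α < g η α) ∧
    (∀ η : Ordinal, ηstar < η → η < ξ → g η α = g ηstar α) :=
  weakCohyperation_min_stable_general f g hg ξ α ηstar hlt hmin hleast
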